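/- arXiv:1311.0181 — 4 statements merged into one kernel-verified Lean document; each statement's English description precedes it below -/
import Mathlib

section
/- Under the assumptions that the cgf κ of the log-likelihood ratio L = log(dP/dQ) under Q is finite and thrice differentiable near s = 1, with D = D(P‖Q) > 0 and V = V(P‖Q) > 0 finite and T = T(P‖Q) finite, the Legendre transform Λ(a) = sup_s [as − κ(s)] satisfies Λ(D) = D, Λ'(D) = 1, Λ''(D) = 1/V, and Λ'''(D) = −T/V³; consequently Λ(a) = a + (a−D)²/(2V) + O((a−D)³) as a → D. -/
open Filter Topology Asymptotics Set MeasureTheory ProbabilityTheory Real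

/-!
All exponential moments of `L` under `Q` are finite, so `κ = cgf L Q` is analytic on `ℝ`, and it is
convex since `κ''(s)` is the variance of `L` under the tilted measure `Q.tilted (s * L)`. As
`exp L = dP/dQ`, tilting at `s = 1` gives back `P`; hence `κ(1) = 0`, `κ'(1) = D`, `κ''(1) = V`
and `κ'''(1) = T`.

For a differentiable convex `κ` the supremum defining `Λ(a)` is attained at every `s` with
`κ'(s) = a`. Near `a = D` the inverse function theorem provides such an `s = φ(a)` with `φ(D) = 1`,
so that `Λ(a) = a φ(a) - κ(φ(a))`. The envelope theorem gives `Λ' = φ`, hence `Λ'' = 1/κ''(φ)`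
and `Λ''' = -κ'''(φ)/κ''(φ)³`, and the cubic remainder bound follows by integrating the bounded
third derivative three times with the mean value inequality.
-/

theorem isBigO_sub_pow_succ_of_hasDerivAt {f f' : ℝ → ℝ} {x₀ : ℝ} {n : ℕ}
    (hf : ∀ᶠ x in 𝓝 x₀, HasDerivAt f (f' x) x) (hf' : f' =O[𝓝 x₀] fun x ↦ (x - x₀) ^ n) :
    (fun x ↦ f x - f x₀) =O[𝓝 x₀] fun x ↦ (x - x₀) ^ (n + 1) := by
  obtain ⟨C, hC0, hC⟩ := hf'.exists_nonneg
  obtain ⟨r, hr, hball⟩ := Metric.eventually_nhds_iff_ball.1 (hf.and hC.bound)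
  refine IsBigO.of_bound C (eventually_of_mem (Metric.ball_mem_nhds x₀ hr) fun x hx ↦ ?_)
  have hseg : segment ℝ x₀ x ⊆ Metric.ball x₀ r :=
    (convex_ball x₀ r).segment_subset (Metric.mem_ball_self hr) hx
  have hmvt := (convex_segment x₀ x).norm_image_sub_le_of_norm_hasDerivWithin_le
    (C := C * ‖x - x₀‖ ^ n) (fun y hy ↦ (hball y (hseg hy)).1.hasDerivWithinAt)
    (fun y hy ↦ (hball y (hseg hy)).2.trans <| by
      rw [norm_pow]; gcongr; exact norm_sub_le_of_mem_segment hy)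
    (left_mem_segment ℝ x₀ x) (right_mem_segment ℝ x₀ x)
  simpa [norm_pow, pow_succ, mul_assoc] using hmvt

theorem isBigO_sub_taylor_two {f f₁ f₂ f₃ : ℝ → ℝ} {x₀ : ℝ}
    (h₁ : ∀ᶠ x in 𝓝 x₀, HasDerivAt f (f₁ x) x) (h₂ : ∀ᶠ x in 𝓝 x₀, HasDerivAt f₁ (f₂ x) x)
    (h₃ : ∀ᶠ x in 𝓝 x₀, HasDerivAt f₂ (f₃ x) x) (hf₃ : f₃ =O[𝓝 x₀] fun _ ↦ (1 : ℝ)) :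
    (fun x ↦ f x - (f x₀ + f₁ x₀ * (x - x₀) + f₂ x₀ / 2 * (x - x₀) ^ 2))
      =O[𝓝 x₀] fun x ↦ (x - x₀) ^ 3 := by
  have hO₂ : (fun x ↦ f₂ x - f₂ x₀) =O[𝓝 x₀] fun x ↦ (x - x₀) ^ 1 :=
    isBigO_sub_pow_succ_of_hasDerivAt h₃ (by simpa using hf₃)
  have hO₁ : (fun x ↦ f₁ x - (f₁ x₀ + f₂ x₀ * (x - x₀))) =O[𝓝 x₀] fun x ↦ (x - x₀) ^ 2 := by
    have hd : ∀ᶠ x in 𝓝 x₀,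
        HasDerivAt (fun x ↦ f₁ x - (f₁ x₀ + f₂ x₀ * (x - x₀))) (f₂ x - f₂ x₀) x :=
      h₂.mono fun x hx ↦ (hx.fun_sub ((((hasDerivAt_id' x).sub_const x₀).const_mul
        (f₂ x₀)).const_add (f₁ x₀))).congr_deriv (by ring)
    simpa using isBigO_sub_pow_succ_of_hasDerivAt hd hO₂
  have hd : ∀ᶠ x in 𝓝 x₀, HasDerivAt
      (fun x ↦ f x - (f x₀ + f₁ x₀ * (x - x₀) + f₂ x₀ / 2 * (x - x₀) ^ 2))
      (f₁ x - (f₁ x₀ + f₂ x₀ * (x - x₀))) x :=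
    h₁.mono fun x hx ↦ (hx.fun_sub (((((hasDerivAt_id' x).sub_const x₀).const_mul
      (f₁ x₀)).const_add (f x₀)).fun_add ((((hasDerivAt_id' x).sub_const x₀).pow 2).const_mul
      (f₂ x₀ / 2)))).congr_deriv (by ring)
  simpa using isBigO_sub_pow_succ_of_hasDerivAt hd hO₁

theorem exists_abs_le_of_isBigO_pow {f : ℝ → ℝ} {x₀ : ℝ} {n : ℕ}
    (h : f =O[𝓝 x₀] fun x ↦ (x - x₀) ^ n) :
    ∃ K δ : ℝ, 0 < δ ∧ ∀ x, |x - x₀| < δ → |f x| ≤ K * |x - x₀| ^ n := by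
  obtain ⟨K, hK⟩ := h.bound
  obtain ⟨δ, hδ, hδK⟩ := Metric.eventually_nhds_iff.1 hK
  exact ⟨K, δ, hδ, fun x hx ↦ by simpa [abs_pow] using hδK (by rwa [Real.dist_eq])⟩

/-- `sSup` of a set that is unbounded above is `0`; below, the value is only used where the
supremum is attained. -/
noncomputable def legendreTransform (κ : ℝ → ℝ) (a : ℝ) : ℝ :=
  sSup {v | ∃ s : ℝ, v = a * s - κ s}

theorem ConvexOn.add_mul_sub_le_of_hasDerivAt {f : ℝ → ℝ} {f' x : ℝ} (hf : ConvexOn ℝ univ f)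
    (hx : HasDerivAt f f' x) (y : ℝ) : f x + f' * (y - x) ≤ f y := by
  rcases lt_trichotomy x y with hxy | rfl | hyx
  · have := hf.le_slope_of_hasDerivAt (mem_univ x) (mem_univ y) hxy hx
    rw [slope_def_field, le_div_iff₀ (sub_pos.2 hxy)] at this
    linarith
  · simp
  · have := hf.slope_le_of_hasDerivAt (mem_univ y) (mem_univ x) hyx hx
    rw [slope_def_field, div_le_iff₀ (sub_pos.2 hyx)] at this
    linarith

theorem legendreTransform_eq_of_hasDerivAt {κ : ℝ → ℝ} {a σ : ℝ} (hκ : ConvexOn ℝ univ κ)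
    (h : HasDerivAt κ a σ) : legendreTransform κ a = a * σ - κ σ :=
  IsGreatest.csSup_eq ⟨⟨σ, rfl⟩, by
    rintro _ ⟨s, rfl⟩
    linarith [hκ.add_mul_sub_le_of_hasDerivAt h s]⟩

theorem HasStrictDerivAt.exists_eventually_rightInverse {f : ℝ → ℝ} {f' x₀ : ℝ}
    (hf : HasStrictDerivAt f f' x₀) (hf' : f' ≠ 0) :
    ∃ g : ℝ → ℝ, g (f x₀) = x₀ ∧ ∀ᶠ y in 𝓝 (f x₀), ContinuousAt g y ∧ f (g y) = y := by
  have hF := hf.hasStrictFDerivAt_equiv hf'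
  let e := hF.toOpenPartialHomeomorph f
  refine ⟨e.symm, e.left_inv hF.mem_toOpenPartialHomeomorph_source, ?_⟩
  filter_upwards [e.open_target.mem_nhds hF.image_mem_toOpenPartialHomeomorph_target] with y hy
  exact ⟨e.continuousAt_symm hy, e.right_inv hy⟩

section LegendreTransform

variable {κ : ℝ → ℝ} {σ₀ : ℝ}

theorem exists_hasDerivAt_legendreTransform (hκ : ContDiff ℝ 2 κ) (hconv : ConvexOn ℝ univ κ)
    (hσ₀ : deriv (deriv κ) σ₀ ≠ 0) :
    ∃ φ : ℝ → ℝ, φ (deriv κ σ₀) = σ₀ ∧ ∀ᶠ a in 𝓝 (deriv κ σ₀),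
      HasDerivAt (legendreTransform κ) (φ a) a ∧ HasDerivAt φ (deriv (deriv κ) (φ a))⁻¹ a ∧
        deriv (deriv κ) (φ a) ≠ 0 := by
  have hκ₁ : ContDiff ℝ 1 (deriv κ) := hκ.deriv'
  obtain ⟨φ, hφσ₀, hφ⟩ :=
    (hκ₁.contDiffAt.hasStrictDerivAt one_ne_zero).exists_eventually_rightInverse hσ₀
  have hne : ∀ᶠ a in 𝓝 (deriv κ σ₀), deriv (deriv κ) (φ a) ≠ 0 :=
    ((hκ₁.continuous_deriv le_rfl).continuousAt.comp hφ.self_of_nhds.1).eventually_ne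
      (by simpa [hφσ₀])
  refine ⟨φ, hφσ₀, ?_⟩
  filter_upwards [hφ.eventually_nhds, hne] with a ha hne_a
  have hφ' : HasDerivAt φ (deriv (deriv κ) (φ a))⁻¹ a :=
    HasDerivAt.of_local_left_inverse ha.self_of_nhds.1
      (hκ₁.differentiable one_ne_zero (φ a)).hasDerivAt hne_a (ha.mono fun _ h ↦ h.2)
  refine ⟨?_, hφ', hne_a⟩
  have hκ' : ∀ s, HasDerivAt κ (deriv κ s) s :=
    fun s ↦ (hκ.differentiable two_ne_zero s).hasDerivAt
  have hΛ : legendreTransform κ =ᶠ[𝓝 a] fun b ↦ b * φ b - κ (φ b) := by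
    filter_upwards [ha] with b hb
    simpa [hb.2] using legendreTransform_eq_of_hasDerivAt hconv (hκ' (φ b))
  refine ((((hasDerivAt_id' a).mul hφ').sub ((hκ' (φ a)).comp a hφ')).congr_deriv ?_
    ).congr_of_eventuallyEq hΛ
  -- envelope theorem: the `φ'` terms cancel because `κ' (φ a) = a`
  rw [ha.self_of_nhds.2]
  ring

theorem legendreTransform_taylor_expansion {a₀ : ℝ} (hκ : ContDiff ℝ 3 κ)
    (hconv : ConvexOn ℝ univ κ) (ha₀ : deriv κ σ₀ = a₀) (hσ₀ : deriv (deriv κ) σ₀ ≠ 0) :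
    deriv (legendreTransform κ) a₀ = σ₀ ∧
    deriv (deriv (legendreTransform κ)) a₀ = (deriv (deriv κ) σ₀)⁻¹ ∧
    deriv (deriv (deriv (legendreTransform κ))) a₀ =
      -deriv (deriv (deriv κ)) σ₀ / deriv (deriv κ) σ₀ ^ 3 ∧
    (fun a ↦ legendreTransform κ a - (legendreTransform κ a₀ + σ₀ * (a - a₀)
      + (deriv (deriv κ) σ₀)⁻¹ / 2 * (a - a₀) ^ 2)) =O[𝓝 a₀] fun a ↦ (a - a₀) ^ 3 := by
  subst ha₀
  have hκ₂ : ContDiff ℝ 1 (deriv (deriv κ)) := hκ.deriv'.deriv'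
  obtain ⟨φ, hφσ₀, hφ⟩ := exists_hasDerivAt_legendreTransform (hκ.of_le (by norm_num)) hconv hσ₀
  set W : ℝ → ℝ := fun a ↦
    -(deriv (deriv (deriv κ)) (φ a) * (deriv (deriv κ) (φ a))⁻¹) / deriv (deriv κ) (φ a) ^ 2
  have h_inv_comp : ∀ᶠ a in 𝓝 (deriv κ σ₀), HasDerivAt (fun a ↦ (deriv (deriv κ) (φ a))⁻¹) (W a) a := by
    filter_upwards [hφ] with a ha
    exact (((hκ₂.differentiable one_ne_zero (φ a)).hasDerivAt).comp a ha.2.1).inv ha.2.2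
  have hW : ContinuousAt W (deriv κ σ₀) := by
    have hφ_cont : ContinuousAt φ (deriv κ σ₀) := hφ.self_of_nhds.2.1.continuousAt
    have h₂ := hκ₂.continuous.continuousAt.comp hφ_cont
    have h₃ := (hκ₂.continuous_deriv le_rfl).continuousAt.comp hφ_cont
    have h₂σ₀ : deriv (deriv κ) (φ (deriv κ σ₀)) ≠ 0 := by rwa [hφσ₀]
    exact ((h₃.mul (h₂.inv₀ h₂σ₀)).neg).div (h₂.pow 2) (pow_ne_zero 2 h₂σ₀)
  have hd₁ : deriv (legendreTransform κ) =ᶠ[𝓝 (deriv κ σ₀)] φ :=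
    hφ.eventually_nhds.mono fun a ha ↦ ha.self_of_nhds.1.deriv
  have hd₂ : deriv (deriv (legendreTransform κ)) =ᶠ[𝓝 (deriv κ σ₀)]
      fun a ↦ (deriv (deriv κ) (φ a))⁻¹ :=
    hd₁.deriv.trans (hφ.eventually_nhds.mono fun a ha ↦ ha.self_of_nhds.2.1.deriv)
  refine ⟨by rw [hd₁.eq_of_nhds, hφσ₀], by rw [hd₂.eq_of_nhds, hφσ₀], ?_, ?_⟩
  · rw [hd₂.deriv_eq, h_inv_comp.self_of_nhds.deriv]
    simp only [W, hφσ₀]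
    field_simp
  · simpa only [hφσ₀] using isBigO_sub_taylor_two (hφ.mono fun a ha ↦ ha.1)
      (hφ.mono fun a ha ↦ ha.2.1) h_inv_comp (hW.tendsto.isBigO_one ℝ)

end LegendreTransform

section CumulantGeneratingFunction

variable {Ω : Type*} {m : MeasurableSpace Ω} {X : Ω → ℝ} {μ : Measure Ω} {v : ℝ}

theorem iteratedDeriv_three_cgf (h : v ∈ interior (integrableExpSet X μ)) :
    iteratedDeriv 3 (cgf X μ) v = μ[fun ω ↦ X ω ^ 3 * exp (v * X ω)] / mgf X μ v
      - 3 * deriv (cgf X μ) v * iteratedDeriv 2 (cgf X μ) v - deriv (cgf X μ) v ^ 3 := by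
  rcases eq_zero_or_neZero μ with rfl | hμ
  · simp
  have hM₀ : mgf X μ v ≠ 0 := (mgf_pos' hμ.out (interior_subset (s := integrableExpSet X μ) h)).ne'
  have h_two : iteratedDeriv 2 (cgf X μ) =ᶠ[𝓝 v]
      fun u ↦ μ[fun ω ↦ X ω ^ 2 * exp (u * X ω)] / mgf X μ u - deriv (cgf X μ) u ^ 2 := by
    filter_upwards [isOpen_interior.eventually_mem h] with u hu using iteratedDeriv_two_cgf hu
  have h_deriv_cgf : HasDerivAt (deriv (cgf X μ)) (iteratedDeriv 2 (cgf X μ) v) v := by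
    rw [iteratedDeriv_succ, iteratedDeriv_one]
    exact (analyticAt_cgf h).deriv.differentiableAt.hasDerivAt
  have h_deriv := ((hasDerivAt_integral_pow_mul_exp_real h 2).fun_div (hasDerivAt_mgf h)
    hM₀).fun_sub (h_deriv_cgf.fun_pow 2)
  rw [iteratedDeriv_succ, h_two.deriv_eq, h_deriv.deriv, iteratedDeriv_two_cgf h, deriv_cgf h]
  generalize mgf X μ v = M₀ at hM₀ ⊢
  generalize μ[fun ω ↦ X ω * exp (v * X ω)] = M₁
  generalize μ[fun ω ↦ X ω ^ 2 * exp (v * X ω)] = M₂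
  generalize μ[fun ω ↦ X ω ^ 3 * exp (v * X ω)] = M₃
  simp only [Nat.cast_ofNat, Nat.add_one_sub_one, pow_one]
  field_simp
  ring

theorem iteratedDeriv_three_cgf_eq_integral (h : v ∈ interior (integrableExpSet X μ)) :
    iteratedDeriv 3 (cgf X μ) v
      = μ[fun ω ↦ (X ω - deriv (cgf X μ) v) ^ 3 * exp (v * X ω)] / mgf X μ v := by
  rcases eq_zero_or_neZero μ with rfl | hμ
  · simp
  have hM₀ : mgf X μ v ≠ 0 := (mgf_pos' hμ.out (interior_subset (s := integrableExpSet X μ) h)).ne'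
  have hi := integrable_pow_mul_exp_of_mem_interior_integrableExpSet h
  rw [iteratedDeriv_three_cgf h]
  set c := deriv (cgf X μ) v
  have h_expand : μ[fun ω ↦ (X ω - c) ^ 3 * exp (v * X ω)] =
      μ[fun ω ↦ X ω ^ 3 * exp (v * X ω)] - 3 * c * μ[fun ω ↦ X ω ^ 2 * exp (v * X ω)]
        + 3 * c ^ 2 * μ[fun ω ↦ X ω ^ 1 * exp (v * X ω)]
        - c ^ 3 * μ[fun ω ↦ X ω ^ 0 * exp (v * X ω)] := by
    have h_poly : (fun ω ↦ (X ω - c) ^ 3 * exp (v * X ω)) = fun ω ↦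
        X ω ^ 3 * exp (v * X ω) - 3 * c * (X ω ^ 2 * exp (v * X ω))
          + 3 * c ^ 2 * (X ω ^ 1 * exp (v * X ω)) - c ^ 3 * (X ω ^ 0 * exp (v * X ω)) := by
      ext ω
      ring
    rw [h_poly, integral_sub _ ((hi 0).const_mul _), integral_add _ ((hi 1).const_mul _),
      integral_sub (hi 3) ((hi 2).const_mul _), integral_const_mul, integral_const_mul,
      integral_const_mul]
    · exact (hi 3).sub ((hi 2).const_mul _)
    · exact ((hi 3).sub ((hi 2).const_mul _)).add ((hi 1).const_mul _)
  have hc : μ[fun ω ↦ X ω ^ 1 * exp (v * X ω)] = c * mgf X μ v := by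
    simp [c, deriv_cgf h, hM₀]
  have hκ₂ : μ[fun ω ↦ X ω ^ 2 * exp (v * X ω)] =
      (iteratedDeriv 2 (cgf X μ) v + c ^ 2) * mgf X μ v := by
    simp [c, iteratedDeriv_two_cgf h, hM₀]
  rw [h_expand, hc, hκ₂]
  simp only [pow_zero, one_mul]
  rw [← mgf]
  generalize μ[fun ω ↦ X ω ^ 3 * exp (v * X ω)] = M₃
  field_simp
  ring

theorem mem_interior_integrableExpSet (h : ∀ t, Integrable (fun ω ↦ exp (t * X ω)) μ) (v : ℝ) :
    v ∈ interior (integrableExpSet X μ) := by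
  simp [integrableExpSet, h]

theorem contDiff_cgf (h : ∀ t, Integrable (fun ω ↦ exp (t * X ω)) μ) {n : WithTop ℕ∞} :
    ContDiff ℝ n (cgf X μ) :=
  AnalyticOnNhd.contDiff fun v _ ↦ analyticAt_cgf (mem_interior_integrableExpSet h v)

theorem convexOn_cgf (h : ∀ t, Integrable (fun ω ↦ exp (t * X ω)) μ) :
    ConvexOn ℝ univ (cgf X μ) :=
  convexOn_univ_of_deriv2_nonneg ((contDiff_cgf h (n := 1)).differentiable one_ne_zero)
    ((contDiff_cgf h (n := 2)).differentiable_deriv_two) fun v ↦ by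
      rw [← iteratedDeriv_eq_iterate, ← variance_tilted_mul (mem_interior_integrableExpSet h v)]
      exact variance_nonneg _ _

end CumulantGeneratingFunction

section LogLikelihoodRatio

variable {Ω : Type*} {m : MeasurableSpace Ω} {P Q : Measure Ω} [SigmaFinite Q] {L : Ω → ℝ}
  (hPQ : P ≪ Q) (hexp : ∀ᵐ ω ∂Q, exp (L ω) = (P.rnDeriv Q ω).toReal)
include hPQ hexp

theorem integral_mul_exp_eq_integral [SigmaFinite P] (g : Ω → ℝ) :
    ∫ ω, g ω * exp (1 * L ω) ∂Q = ∫ ω, g ω ∂P := by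
  rw [← integral_rnDeriv_smul hPQ]
  refine integral_congr_ae ?_
  filter_upwards [hexp] with ω hω
  rw [one_mul, hω, smul_eq_mul, mul_comm]

variable [IsProbabilityMeasure P]

theorem mgf_one_eq_one : mgf L Q 1 = 1 := by
  simpa [mgf] using integral_mul_exp_eq_integral hPQ hexp 1

theorem cgf_one_eq_zero : cgf L Q 1 = 0 := by
  rw [cgf, mgf_one_eq_one hPQ hexp, log_one]

theorem deriv_cgf_one (h : 1 ∈ interior (integrableExpSet L Q)) :
    deriv (cgf L Q) 1 = ∫ ω, L ω ∂P := by
  rw [deriv_cgf h, mgf_one_eq_one hPQ hexp, div_one, integral_mul_exp_eq_integral hPQ hexp]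

theorem iteratedDeriv_two_cgf_one (h : 1 ∈ interior (integrableExpSet L Q)) :
    iteratedDeriv 2 (cgf L Q) 1 = ∫ ω, (L ω - ∫ ω, L ω ∂P) ^ 2 ∂P := by
  rw [iteratedDeriv_two_cgf_eq_integral h, mgf_one_eq_one hPQ hexp, div_one,
    integral_mul_exp_eq_integral hPQ hexp, deriv_cgf_one hPQ hexp h]

theorem iteratedDeriv_three_cgf_one (h : 1 ∈ interior (integrableExpSet L Q)) :
    iteratedDeriv 3 (cgf L Q) 1 = ∫ ω, (L ω - ∫ ω, L ω ∂P) ^ 3 ∂P := by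
  rw [iteratedDeriv_three_cgf_eq_integral h, mgf_one_eq_one hPQ hexp, div_one,
    integral_mul_exp_eq_integral hPQ hexp, deriv_cgf_one hPQ hexp h]

end LogLikelihoodRatio

theorem legendre_transform_loglikelihood_general
    {Ω : Type*} [MeasurableSpace Ω]
    (P Q : Measure Ω) [IsProbabilityMeasure P] [IsProbabilityMeasure Q]
    (hPQ : P ≪ Q)
    (L : Ω → ℝ)
    (hL : ∀ᵐ ω ∂Q, L ω = Real.log ((P.rnDeriv Q ω).toReal))
    (hrnpos : ∀ᵐ ω ∂Q, 0 < (P.rnDeriv Q ω).toReal)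
    (hint : ∀ s : ℝ, Integrable (fun ω => Real.exp (s * L ω)) Q)
    (D V T : ℝ)
    (hD : D = ∫ ω, L ω ∂P)
    (hV : V = ∫ ω, (L ω - D) ^ 2 ∂P)
    (hT : T = ∫ ω, (L ω - D) ^ 3 ∂P)
    (hVpos : 0 < V)
    (κ : ℝ → ℝ) (hκ : ∀ s : ℝ, κ s = Real.log (∫ ω, Real.exp (s * L ω) ∂Q))
    (Λ : ℝ → ℝ) (hΛ : ∀ a : ℝ, Λ a = sSup {v | ∃ s : ℝ, v = a * s - κ s}) :
    Λ D = D ∧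
    deriv Λ D = 1 ∧
    deriv (deriv Λ) D = 1 / V ∧
    deriv (deriv (deriv Λ)) D = -T / V ^ 3 ∧
    ∃ K δ : ℝ, 0 < δ ∧ ∀ a : ℝ, |a - D| < δ →
      |Λ a - (a + (a - D) ^ 2 / (2 * V))| ≤ K * |a - D| ^ 3 := by
  have hexp : ∀ᵐ ω ∂Q, exp (L ω) = (P.rnDeriv Q ω).toReal := by
    filter_upwards [hL, hrnpos] with ω hLω hpos
    rw [hLω, exp_log hpos]
  have h1 := mem_interior_integrableExpSet hint 1
  obtain rfl : κ = cgf L Q := funext hκ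
  obtain rfl : Λ = legendreTransform (cgf L Q) := funext hΛ
  have hκ₁ : deriv (cgf L Q) 1 = D := by rw [deriv_cgf_one hPQ hexp h1, hD]
  have hκ₂ : deriv (deriv (cgf L Q)) 1 = V := by
    simpa only [iteratedDeriv_succ, iteratedDeriv_zero, ← hD, ← hV]
      using iteratedDeriv_two_cgf_one hPQ hexp h1
  have hκ₃ : deriv (deriv (deriv (cgf L Q))) 1 = T := by
    simpa only [iteratedDeriv_succ, iteratedDeriv_zero, ← hD, ← hT]
      using iteratedDeriv_three_cgf_one hPQ hexp h1
  have hΛD : legendreTransform (cgf L Q) D = D := by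
    rw [legendreTransform_eq_of_hasDerivAt (convexOn_cgf hint)
      (hκ₁ ▸ ((contDiff_cgf hint (n := 1)).differentiable one_ne_zero 1).hasDerivAt),
      cgf_one_eq_zero hPQ hexp, mul_one, sub_zero]
  obtain ⟨hΛ₁, hΛ₂, hΛ₃, hO⟩ := legendreTransform_taylor_expansion (contDiff_cgf hint)
    (convexOn_cgf hint) hκ₁ (hκ₂ ▸ hVpos.ne')
  refine ⟨hΛD, hΛ₁, by rw [hΛ₂, hκ₂, one_div], by rw [hΛ₃, hκ₂, hκ₃], ?_⟩
  have hquad : ∀ a, D + 1 * (a - D) + V⁻¹ / 2 * (a - D) ^ 2 = a + (a - D) ^ 2 / (2 * V) :=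
    fun a ↦ by ring
  simpa only [hΛD, hκ₂, hquad] using exists_abs_le_of_isBigO_pow hO

/-- Taylor expansion of the large-deviations function `Λ(a) = sup_s [as − κ(s)]`
of a log-likelihood ratio: `Λ(D) = D`, `Λ'(D) = 1`, `Λ''(D) = 1/V`, `Λ'''(D) = −T/V³`,
hence `Λ(a) = a + (a−D)²/(2V) + O((a−D)³)` as `a → D`. -/
theorem legendre_transform_loglikelihood
    {Ω : Type*} [MeasurableSpace Ω]
    (P Q : Measure Ω) [IsProbabilityMeasure P] [IsProbabilityMeasure Q]
    (hPQ : P ≪ Q)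
    (L : Ω → ℝ) (hLmeas : Measurable L)
    (hL : ∀ᵐ ω ∂Q, L ω = Real.log ((P.rnDeriv Q ω).toReal))
    (hrnpos : ∀ᵐ ω ∂Q, 0 < (P.rnDeriv Q ω).toReal)
    (hint : ∀ s : ℝ, Integrable (fun ω => Real.exp (s * L ω)) Q)
    (D V T : ℝ)
    (hD : D = ∫ ω, L ω ∂P)
    (hV : V = ∫ ω, (L ω - D) ^ 2 ∂P)
    (hT : T = ∫ ω, (L ω - D) ^ 3 ∂P)
    (hDpos : 0 < D) (hVpos : 0 < V)
    (κ : ℝ → ℝ) (hκ : ∀ s : ℝ, κ s = Real.log (∫ ω, Real.exp (s * L ω) ∂Q))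
    (hsmooth : ∃ ε > 0, ContDiffOn ℝ 3 κ (Set.Ioo (1 - ε) (1 + ε)))
    (Λ : ℝ → ℝ) (hΛ : ∀ a : ℝ, Λ a = sSup {v | ∃ s : ℝ, v = a * s - κ s}) :
    Λ D = D ∧
    deriv Λ D = 1 ∧
    deriv (deriv Λ) D = 1 / V ∧
    deriv (deriv (deriv Λ)) D = -T / V ^ 3 ∧
    ∃ K δ : ℝ, 0 < δ ∧ ∀ a : ℝ, |a - D| < δ →
      |Λ a - (a + (a - D) ^ 2 / (2 * V))| ≤ K * |a - D| ^ 3 :=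
  legendre_transform_loglikelihood_general P Q hPQ L hL hrnpos hint D V T hD hV hT hVpos κ hκ Λ hΛ
end

section
/- The conditional Kullback–Leibler divergence D(W‖Q|P), as a function of an input distribution P on X and an output distribution Q on Y, admits a saddlepoint at (P₀, Q*) for every capacity-achieving input distribution P₀: for all P and Q, D(W‖Q*|P) ≤ D(W‖Q*|P₀) ≤ D(W‖Q|P₀), with saddle value equal to the channel capacity C. -/
/-!
Every input letter has divergence at most `C` from `Q*`, so averaging over any input
distribution `P` gives at most `C`, which `P₀` attains. On the other side, since `P₀` induces the
output distribution `Q*`, moving the reference measure from `Q*` to `Q` adds exactly the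
divergence `D(Q*‖Q)`, which is nonnegative by Gibbs' inequality.
-/

open Real Finset

lemma sub_le_mul_log_div {p q : ℝ} (hp : 0 ≤ p) (hq : 0 < q) : p - q ≤ p * log (p / q) := by
  have h := mul_nonneg hq.le (InformationTheory.klFun_nonneg (div_nonneg hp hq.le))
  have hpq : q * (p / q) = p := mul_div_cancel₀ p hq.ne'
  have hexpand : q * InformationTheory.klFun (p / q) = p * log (p / q) + q - p := by
    rw [InformationTheory.klFun, mul_sub, mul_add, ← mul_assoc, hpq, mul_one]
  linarith

lemma sum_mul_log_div_nonneg {ι : Type*} [Fintype ι] {p q : ι → ℝ} (hp : ∀ i, 0 ≤ p i)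
    (hq : ∀ i, 0 < q i) (hpq : ∑ i, p i = ∑ i, q i) : 0 ≤ ∑ i, p i * log (p i / q i) :=
  calc 0 = ∑ i, (p i - q i) := by rw [sum_sub_distrib, hpq, sub_self]
    _ ≤ ∑ i, p i * log (p i / q i) := sum_le_sum fun i _ => sub_le_mul_log_div (hp i) (hq i)

lemma sum_mul_log_div_eq_add {ι : Type*} [Fintype ι] (w : ι → ℝ) {q r : ι → ℝ}
    (hq : ∀ i, q i ≠ 0) (hr : ∀ i, r i ≠ 0) :
    ∑ i, w i * log (w i / q i) = ∑ i, w i * log (w i / r i) + ∑ i, w i * log (r i / q i) := by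
  rw [← sum_add_distrib]
  refine sum_congr rfl fun i _ => ?_
  rcases eq_or_ne (w i) 0 with hw | hw
  · simp [hw]
  · rw [← mul_add, ← log_mul (div_ne_zero hw (hr i)) (div_ne_zero (hr i) (hq i)),
      div_mul_div_cancel₀ (hr i)]

section CondKLDiv

variable {X Y : Type*} [Fintype X] [Fintype Y]

/-- The conditional divergence `D(W‖Q|P) = ∑ₓ P(x) D(Wₓ‖Q)`. -/
noncomputable def condKLDiv (W : X → Y → ℝ) (Q : Y → ℝ) (P : X → ℝ) : ℝ :=
  ∑ x, P x * ∑ y, W x y * log (W x y / Q y)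

lemma condKLDiv_le {W : X → Y → ℝ} {Q : Y → ℝ} {P : X → ℝ} {C : ℝ}
    (hC : ∀ x, ∑ y, W x y * log (W x y / Q y) ≤ C) (hP0 : ∀ x, 0 ≤ P x) (hP1 : ∑ x, P x = 1) :
    condKLDiv W Q P ≤ C :=
  calc condKLDiv W Q P ≤ ∑ x, P x * C :=
        sum_le_sum fun x _ => mul_le_mul_of_nonneg_left (hC x) (hP0 x)
    _ = C := by rw [← sum_mul, hP1, one_mul]

lemma condKLDiv_eq_add {W : X → Y → ℝ} {P : X → ℝ} {Q R : Y → ℝ}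
    (hout : ∀ y, ∑ x, P x * W x y = R y) (hQ : ∀ y, Q y ≠ 0) (hR : ∀ y, R y ≠ 0) :
    condKLDiv W Q P = condKLDiv W R P + ∑ y, R y * log (R y / Q y) := by
  have hcross : ∑ x, P x * ∑ y, W x y * log (R y / Q y) = ∑ y, R y * log (R y / Q y) := by
    simp_rw [mul_sum, ← mul_assoc]
    rw [sum_comm]
    simp_rw [← sum_mul, hout]
  have hsplit : ∀ x, ∑ y, W x y * log (W x y / Q y) =
      ∑ y, W x y * log (W x y / R y) + ∑ y, W x y * log (R y / Q y) := fun x =>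
    sum_mul_log_div_eq_add (W x) hQ hR
  simp only [condKLDiv, hsplit, mul_add, sum_add_distrib, hcross]

end CondKLDiv

theorem conditional_kl_saddlepoint_general
    {X Y : Type*} [Fintype X] [Fintype Y]
    (W : X → Y → ℝ)
    (C : ℝ) (Qstar : Y → ℝ) (hQ0 : ∀ y, 0 < Qstar y) (hQ1 : ∑ y, Qstar y = 1)
    (hC : ∀ x, ∑ y, W x y * Real.log (W x y / Qstar y) ≤ C)
    (P₀ : X → ℝ)
    (hout : ∀ y, ∑ x, P₀ x * W x y = Qstar y)
    (hcap : ∑ x, P₀ x * ∑ y, W x y * Real.log (W x y / Qstar y) = C) :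
    (∀ P : X → ℝ, (∀ x, 0 ≤ P x) → ∑ x, P x = 1 →
        ∑ x, P x * ∑ y, W x y * Real.log (W x y / Qstar y)
          ≤ ∑ x, P₀ x * ∑ y, W x y * Real.log (W x y / Qstar y)) ∧
    (∀ Q : Y → ℝ, (∀ y, 0 < Q y) → ∑ y, Q y = 1 →
        ∑ x, P₀ x * ∑ y, W x y * Real.log (W x y / Qstar y)
          ≤ ∑ x, P₀ x * ∑ y, W x y * Real.log (W x y / Q y)) ∧
    ∑ x, P₀ x * ∑ y, W x y * Real.log (W x y / Qstar y) = C := by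
  refine ⟨fun P hP0 hP1 => hcap ▸ condKLDiv_le hC hP0 hP1, fun Q hQ hQ1' => ?_, hcap⟩
  have hgibbs : 0 ≤ ∑ y, Qstar y * log (Qstar y / Q y) :=
    sum_mul_log_div_nonneg (fun y => (hQ0 y).le) hQ (hQ1.trans hQ1'.symm)
  calc condKLDiv W Qstar P₀ ≤ condKLDiv W Qstar P₀ + ∑ y, Qstar y * log (Qstar y / Q y) :=
        le_add_of_nonneg_right hgibbs
    _ = condKLDiv W Q P₀ :=
        (condKLDiv_eq_add hout (fun y => (hQ y).ne') fun y => (hQ0 y).ne').symm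

/-- saddlepoint of the conditional KL divergence `D(W‖Q|P)` at
`(P₀, Q*)` for any capacity-achieving input distribution `P₀`, with saddle value `C`. -/
theorem conditional_kl_saddlepoint
    {X Y : Type*} [Fintype X] [Fintype Y]
    (W : X → Y → ℝ) (hW0 : ∀ x y, 0 ≤ W x y) (hW1 : ∀ x, ∑ y, W x y = 1)
    (C : ℝ) (Qstar : Y → ℝ) (hQ0 : ∀ y, 0 < Qstar y) (hQ1 : ∑ y, Qstar y = 1)
    (hC : ∀ x, ∑ y, W x y * Real.log (W x y / Qstar y) ≤ C)
    (P₀ : X → ℝ) (hP₀0 : ∀ x, 0 ≤ P₀ x) (hP₀1 : ∑ x, P₀ x = 1)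
    (hout : ∀ y, ∑ x, P₀ x * W x y = Qstar y)
    (hcap : ∑ x, P₀ x * ∑ y, W x y * Real.log (W x y / Qstar y) = C) :
    (∀ P : X → ℝ, (∀ x, 0 ≤ P x) → ∑ x, P x = 1 →
        ∑ x, P x * ∑ y, W x y * Real.log (W x y / Qstar y)
          ≤ ∑ x, P₀ x * ∑ y, W x y * Real.log (W x y / Qstar y)) ∧
    (∀ Q : Y → ℝ, (∀ y, 0 < Q y) → ∑ y, Q y = 1 →
        ∑ x, P₀ x * ∑ y, W x y * Real.log (W x y / Qstar y)
          ≤ ∑ x, P₀ x * ∑ y, W x y * Real.log (W x y / Q y)) ∧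
    ∑ x, P₀ x * ∑ y, W x y * Real.log (W x y / Qstar y) = C :=
  conditional_kl_saddlepoint_general W C Qstar hQ0 hQ1 hC P₀ hout hcap
end

section
/- For the Z channel with parameter θ ∈ (0,1), the capacity-achieving input distribution assigns probability a = 1 − 1/((1−θ)(1 + exp(h₂(θ)/(1−θ)))) to input 0, a ≥ 1/2, and the capacity equals C(θ) = h₂((1−a)(1−θ)) − (1−a)h₂(θ). -/
/-!
Writing `r = P(1)(1 - θ)` for the probability of output `1`, the mutual information of the
Z channel is `h₂(r) - r s` with `s = h₂(θ)/(1 - θ)`. Against the reference Bernoulli law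
`u = (1 + eˢ)⁻¹`, the cross entropy `-r log u - (1 - r) log (1 - u)` equals `r s - log u - s`,
so Gibbs' inequality `h₂(r) ≤ -r log u - (1 - r) log (1 - u)` bounds `h₂(r) - r s` by the
constant `-log u - s`, which is attained at `r = u`, i.e. at `P(1) = 1 - a`.
The bound `a ≥ 1/2` amounts to `eˢ ≥ (1 + θ)/(1 - θ)`, which follows from `log θ ≤ θ - 1`
and `log (1 + θ) ≤ θ`.
-/

open Real

noncomputable def mutualInfo {α β : Type*} [Fintype α] [Fintype β]
    (P : α → ℝ) (W : α → β → ℝ) : ℝ :=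
  ∑ x, ∑ y, P x * W x y * log (W x y / ∑ x', P x' * W x' y)

def zChannel (θ : ℝ) : Fin 2 → Fin 2 → ℝ := ![![1, 0], ![θ, 1 - θ]]

theorem mutualInfo_eq_sum_negMulLog_sub {α β : Type*} [Fintype α] [Fintype β]
    {P : α → ℝ} {W : α → β → ℝ} (hP : ∀ x, 0 ≤ P x) (hW : ∀ x y, 0 ≤ W x y) :
    mutualInfo P W =
      ∑ y, negMulLog (∑ x, P x * W x y) - ∑ x, P x * ∑ y, negMulLog (W x y) := by
  have hterm : ∀ x y, P x * W x y * log (W x y / ∑ x', P x' * W x' y) =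
      P x * (W x y * log (W x y)) - P x * W x y * log (∑ x', P x' * W x' y) := by
    intro x y
    rcases (mul_nonneg (hP x) (hW x y)).eq_or_lt with h | h
    · rcases mul_eq_zero.mp h.symm with h' | h' <;> simp [h']
    have hout : 0 < ∑ x', P x' * W x' y :=
      h.trans_le (Finset.single_le_sum (fun x' _ => mul_nonneg (hP x') (hW x' y))
        (Finset.mem_univ x))
    rw [log_div (right_ne_zero_of_mul h.ne') hout.ne']
    ring
  simp only [mutualInfo, hterm, Finset.sum_sub_distrib, negMulLog, Finset.mul_sum]
  rw [Finset.sum_comm (f := fun x y => P x * W x y * log _)]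
  simp only [← Finset.sum_mul]
  simp only [neg_mul, Finset.sum_neg_distrib, mul_neg]
  ring

theorem mutualInfo_zChannel {θ : ℝ} (hθ0 : 0 ≤ θ) (hθ1 : θ ≤ 1) {P : Fin 2 → ℝ}
    (hP : ∀ x, 0 ≤ P x) (hsum : P 0 + P 1 = 1) :
    mutualInfo P (zChannel θ) = binEntropy (P 1 * (1 - θ)) - P 1 * binEntropy θ := by
  have hW : ∀ x y, 0 ≤ zChannel θ x y := by
    intro x y; fin_cases x <;> fin_cases y <;> simp [zChannel, hθ0, hθ1]
  rw [mutualInfo_eq_sum_negMulLog_sub hP hW, binEntropy_eq_negMulLog_add_negMulLog_one_sub,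
    binEntropy_eq_negMulLog_add_negMulLog_one_sub,
    show 1 - P 1 * (1 - θ) = P 0 * 1 + P 1 * θ by linear_combination -hsum]
  simp [Fin.sum_univ_two, zChannel]
  ring

theorem negMulLog_le_neg_mul_log_add_sub {r u : ℝ} (hr : 0 ≤ r) (hu : 0 < u) :
    negMulLog r ≤ -(r * log u) + u - r := by
  rcases hr.eq_or_lt with rfl | hr
  · simpa using hu.le
  have h := log_le_sub_one_of_pos (div_pos hu hr)
  rw [log_div hu.ne' hr.ne', le_sub_iff_add_le, ← mul_le_mul_iff_of_pos_left hr,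
    mul_div_cancel₀ _ hr.ne'] at h
  rw [negMulLog]
  linarith

theorem binEntropy_le_cross_entropy {r u : ℝ} (hr0 : 0 ≤ r) (hr1 : r ≤ 1)
    (hu0 : 0 < u) (hu1 : u < 1) :
    binEntropy r ≤ -(r * log u) - (1 - r) * log (1 - u) := by
  rw [binEntropy_eq_negMulLog_add_negMulLog_one_sub]
  linarith [negMulLog_le_neg_mul_log_add_sub hr0 hu0,
    negMulLog_le_neg_mul_log_add_sub (sub_nonneg.mpr hr1) (sub_pos.mpr hu1)]

theorem binEntropy_sub_mul_le (s : ℝ) {r : ℝ} (hr0 : 0 ≤ r) (hr1 : r ≤ 1) :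
    binEntropy r - r * s ≤ binEntropy (1 + exp s)⁻¹ - (1 + exp s)⁻¹ * s := by
  set u := (1 + exp s)⁻¹
  have hu0 : 0 < u := by positivity
  have h1u : 1 - u = exp s * u := by simp only [u]; field_simp; ring
  have hu1 : u < 1 := by nlinarith [exp_pos s]
  have hlog : log (1 - u) = s + log u := by rw [h1u, log_mul (exp_pos s).ne' hu0.ne', log_exp]
  have hcross : ∀ r, -(r * log u) - (1 - r) * log (1 - u) - r * s = -log u - s := by
    intro r; rw [hlog]; ring
  have hself : binEntropy u = -(u * log u) - (1 - u) * log (1 - u) := by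
    simp only [binEntropy, log_inv]; ring
  linarith [binEntropy_le_cross_entropy hr0 hr1 hu0 hu1, hcross r, hcross u]

theorem one_sub_mul_log_one_add_le_neg_mul_log {θ : ℝ} (hθ0 : 0 ≤ θ) (hθ1 : θ ≤ 1) :
    (1 - θ) * log (1 + θ) ≤ -(θ * log θ) := by
  have h1 : log (1 + θ) ≤ θ := by linarith [log_le_sub_one_of_pos (by linarith : 0 < 1 + θ)]
  have h2 : θ * log θ ≤ θ * (θ - 1) := by
    rcases hθ0.eq_or_lt with rfl | hθ0
    · simp
    exact mul_le_mul_of_nonneg_left (by linarith [log_le_sub_one_of_pos hθ0]) hθ0.le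
  nlinarith [mul_le_mul_of_nonneg_left h1 (sub_nonneg.mpr hθ1)]

theorem two_le_one_sub_mul_one_add_exp {θ : ℝ} (hθ0 : 0 < θ) (hθ1 : θ < 1) :
    2 ≤ (1 - θ) * (1 + exp (binEntropy θ / (1 - θ))) := by
  have hθ1' : 0 < 1 - θ := sub_pos.mpr hθ1
  have hlog : log ((1 + θ) / (1 - θ)) ≤ binEntropy θ / (1 - θ) := by
    rw [log_div (by linarith) hθ1'.ne', le_div_iff₀ hθ1', binEntropy,
      log_inv, log_inv]
    linarith [one_sub_mul_log_one_add_le_neg_mul_log hθ0.le hθ1.le]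
  have hexp : (1 + θ) / (1 - θ) ≤ exp (binEntropy θ / (1 - θ)) :=
    (le_exp_log _).trans (exp_le_exp.mpr hlog)
  rw [div_le_iff₀ hθ1'] at hexp
  linarith

/-- Z channel with parameter θ ∈ (0,1): the capacity-achieving input
distribution puts mass `a = 1 − 1/((1−θ)(1+exp(h₂(θ)/(1−θ))))` on input 0, `a ≥ 1/2`,
and the capacity equals `C(θ) = h₂((1−a)(1−θ)) − (1−a)h₂(θ)`. -/
theorem z_channel_capacity
    (θ : ℝ) (hθ0 : 0 < θ) (hθ1 : θ < 1)
    (h2 : ℝ → ℝ)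
    (hh2 : ∀ p, h2 p = -(p * Real.log p) - (1 - p) * Real.log (1 - p))
    (a : ℝ) (ha : a = 1 - 1 / ((1 - θ) * (1 + Real.exp (h2 θ / (1 - θ)))))
    (W : Fin 2 → Fin 2 → ℝ) (hW : W = ![![1, 0], ![θ, 1 - θ]])
    (Ifun : (Fin 2 → ℝ) → ℝ)
    (hI : ∀ P : Fin 2 → ℝ,
      Ifun P = ∑ x, ∑ y, P x * W x y * Real.log (W x y / ∑ x', P x' * W x' y))
    (C : ℝ) (hC : C = h2 ((1 - a) * (1 - θ)) - (1 - a) * h2 θ)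
    (Pstar : Fin 2 → ℝ) (hPstar : Pstar = ![a, 1 - a]) :
    1 / 2 ≤ a ∧
    Ifun Pstar = C ∧
    (∀ P : Fin 2 → ℝ, (∀ x, 0 ≤ P x) → ∑ x, P x = 1 → Ifun P ≤ C) := by
  obtain rfl : h2 = binEntropy := funext fun p => by simp only [hh2, binEntropy, log_inv]; ring
  subst hW hPstar hC
  have hθ1' : 0 < 1 - θ := sub_pos.mpr hθ1
  set s := binEntropy θ / (1 - θ)
  have hu : (1 - a) * (1 - θ) = (1 + exp s)⁻¹ := by rw [ha]; field_simp; ring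
  have hIz : ∀ P : Fin 2 → ℝ, (∀ x, 0 ≤ P x) → ∑ x, P x = 1 →
      Ifun P = binEntropy (P 1 * (1 - θ)) - P 1 * (1 - θ) * s := by
    intro P hP hsum
    rw [hI, ← mutualInfo, ← zChannel,
      mutualInfo_zChannel hθ0.le hθ1.le hP (by simpa [Fin.sum_univ_two] using hsum)]
    simp only [s]
    field_simp
  have half : 1 / 2 ≤ a := by
    have := one_div_le_one_div_of_le two_pos (two_le_one_sub_mul_one_add_exp hθ0 hθ1)
    linarith
  have hPstar_nonneg : ∀ x, 0 ≤ (![a, 1 - a] : Fin 2 → ℝ) x := by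
    have : 0 < 1 - a := pos_of_mul_pos_left (hu ▸ by positivity) hθ1'.le
    intro x; fin_cases x <;> simp <;> linarith
  have hopt : Ifun ![a, 1 - a] = binEntropy ((1 - a) * (1 - θ)) - (1 - a) * binEntropy θ := by
    rw [hIz _ hPstar_nonneg (by simp)]
    simp only [Matrix.cons_val_one, Matrix.cons_val_zero, s]
    field_simp
  refine ⟨half, hopt, fun P hP hsum => ?_⟩
  have hq1 : P 1 ≤ 1 := by
    linarith [hP 0, show P 0 + P 1 = 1 by simpa [Fin.sum_univ_two] using hsum]
  rw [← hopt, hIz P hP hsum, hIz _ hPstar_nonneg (by simp)]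
  simp only [Matrix.cons_val_one, Matrix.cons_val_zero]
  rw [hu]
  exact binEntropy_sub_mul_le s (mul_nonneg (hP 1) hθ1'.le)
    (mul_le_one₀ hq1 hθ1'.le (by linarith))
end

section
/- The dimensionality identity for the sets of capacity- and dispersion-achieving input distributions: dim(Π) = nullity(Ĵ) = |X̂| − rank(Ĵ), where Π is the polytope of capacity-achieving input distributions supported on X̂, and Ĵ is the Fisher information matrix restricted to X̂; the key step is that Ĵ P = 1_{X̂} for every P ∈ Π, so ker(Ĵ) contains all differences of elements of Π and conversely every direction in ker(Ĵ) ∩ {h : Σh(x)=0} is a feasible tangent direction of Π. -/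
open Matrix

/-!
With `J = W diag(Q⁻¹) Wᵀ`, every `P` with output distribution `P W = Q` satisfies
`J P = W (Q⁻¹ Q) = W 1 = 1`, so differences of points of `Π` lie in `ker J`. Conversely
`h ⬝ J h = Σ_y (h W)(y)² / Q(y)`, so `J h = 0` forces `h W = 0`, hence also `Σ h = 0`;
then `P₀ + ε h ∈ Π` for a strictly positive `P₀ ∈ Π` and small `ε > 0`, so `ker J` is the
direction space of `Π`, and rank–nullity gives the dimension count.
-/

namespace Matrix

variable {m n R : Type*} [Fintype m] [Fintype n]

theorem sum_eq_sum_vecMul_of_mulVec_one [Semiring R] {A : Matrix m n R}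
    (hA : A *ᵥ 1 = 1) (v : m → R) : ∑ i, v i = ∑ j, (v ᵥ* A) j := by
  rw [← dotProduct_one, ← dotProduct_one, ← hA, dotProduct_mulVec]

variable [DecidableEq n]

theorem mul_diagonal_mul_transpose_mulVec [CommSemiring R] (A : Matrix m n R) (d : n → R)
    (v : m → R) : (A * diagonal d * Aᵀ) *ᵥ v = A *ᵥ (d * v ᵥ* A) := by
  rw [← mulVec_mulVec, ← mulVec_mulVec, mulVec_transpose]
  congr 1
  ext j
  exact mulVec_diagonal d _ j

theorem mul_diagonal_inv_mul_transpose_mulVec_eq_one [Field R] (A : Matrix m n R)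
    (hA : A *ᵥ 1 = 1) {q : n → R} (hq : ∀ j, q j ≠ 0) {p : m → R} (hp : p ᵥ* A = q) :
    (A * diagonal q⁻¹ * Aᵀ) *ᵥ p = 1 := by
  have hq' : q⁻¹ * q = 1 := funext fun j => inv_mul_cancel₀ (hq j)
  rw [mul_diagonal_mul_transpose_mulVec, hp, hq', hA]

theorem mul_diagonal_mul_transpose_mulVec_eq_zero_iff [Field R] [LinearOrder R]
    [IsStrictOrderedRing R] (A : Matrix m n R) {d : n → R} (hd : ∀ j, 0 < d j) (v : m → R) :
    (A * diagonal d * Aᵀ) *ᵥ v = 0 ↔ v ᵥ* A = 0 := by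
  rw [mul_diagonal_mul_transpose_mulVec]
  refine ⟨fun h => ?_, fun h => by rw [h, mul_zero, mulVec_zero]⟩
  have hquad : ∑ j, d j * (v ᵥ* A) j ^ 2 = 0 := by
    calc ∑ j, d j * (v ᵥ* A) j ^ 2 = v ⬝ᵥ A *ᵥ (d * v ᵥ* A) := by
          rw [dotProduct_mulVec, dotProduct]
          exact Finset.sum_congr rfl fun j _ => by simp only [Pi.mul_apply]; ring
      _ = 0 := by rw [h, dotProduct_zero]
  have hterm := (Finset.sum_eq_zero_iff_of_nonneg fun j _ =>
    mul_nonneg (hd j).le (sq_nonneg _)).1 hquad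
  ext j
  simpa [(hd j).ne'] using hterm j (Finset.mem_univ j)

end Matrix

open Filter Topology in
theorem exists_pos_add_smul_mem_stdSimplex {ι : Type*} [Fintype ι] {p : ι → ℝ}
    (hp : p ∈ stdSimplex ℝ ι) (hpos : ∀ i, 0 < p i) {h : ι → ℝ} (hh : ∑ i, h i = 0) :
    ∃ ε : ℝ, 0 < ε ∧ p + ε • h ∈ stdSimplex ℝ ι := by
  have hnear : ∀ᶠ ε in 𝓝[>] (0 : ℝ), ∀ i, 0 < p i + ε * h i := by
    refine eventually_all.2 fun i => ?_
    have hlim : Tendsto (fun ε : ℝ => p i + ε * h i) (𝓝 0) (𝓝 (p i)) :=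
      (by fun_prop : Continuous fun ε : ℝ => p i + ε * h i).tendsto' 0 (p i) (by simp)
    exact (hlim.mono_left nhdsWithin_le_nhds).eventually_const_lt (hpos i)
  obtain ⟨ε, hε, hε0⟩ := (hnear.and self_mem_nhdsWithin).exists
  refine ⟨ε, hε0, fun i => (hε i).le, ?_⟩
  simp only [Pi.add_apply, Pi.smul_apply, smul_eq_mul, Finset.sum_add_distrib, ← Finset.mul_sum,
    hp.2, hh, mul_zero, add_zero]

theorem vectorSpan_eq_ker_of_exists_add_smul_mem {k V U : Type*} [Field k] [AddCommGroup V]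
    [Module k V] [AddCommGroup U] [Module k U] {S : Set V} (f : V →ₗ[k] U) {c : U}
    (hS : ∀ p ∈ S, f p = c) {p₀ : V} (hp₀ : p₀ ∈ S)
    (hdir : ∀ v ∈ LinearMap.ker f, ∃ ε : k, ε ≠ 0 ∧ p₀ + ε • v ∈ S) :
    vectorSpan k S = LinearMap.ker f := by
  refine le_antisymm ?_ fun v hv => ?_
  · rw [vectorSpan_def, Submodule.span_le]
    rintro _ ⟨p, hp, q, hq, rfl⟩
    simp [vsub_eq_sub, hS p hp, hS q hq]
  · obtain ⟨ε, hε, hmem⟩ := hdir v hv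
    have hεv : ε • v ∈ vectorSpan k S := by
      simpa [vsub_eq_sub] using vsub_mem_vectorSpan k hmem hp₀
    simpa [smul_smul, inv_mul_cancel₀ hε] using Submodule.smul_mem _ ε⁻¹ hεv

theorem capacity_polytope_dimension_general
    {X Y : Type*} [Fintype X] [Fintype Y]
    (W : X → Y → ℝ) (hW1 : ∀ x, ∑ y, W x y = 1)
    (Qstar : Y → ℝ) (hQpos : ∀ y, 0 < Qstar y)
    (PiSet : Set (X → ℝ))
    (hPi : PiSet = {P | (∀ x, 0 ≤ P x) ∧ (∑ x, P x = 1) ∧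
                        ∀ y, ∑ x, P x * W x y = Qstar y})
    (hint : ∃ P₀ ∈ PiSet, ∀ x, 0 < P₀ x)
    (Jhat : Matrix X X ℝ)
    (hJ : ∀ x x', Jhat x x' = ∑ y, W x y * W x' y / Qstar y) :
    (∀ P ∈ PiSet, Jhat *ᵥ P = fun _ => 1) ∧
    (∀ h : X → ℝ, Jhat *ᵥ h = 0 → (∑ x, h x = 0) →
      ∀ P ∈ PiSet, (∀ x, 0 < P x) → ∃ ε : ℝ, 0 < ε ∧ P + ε • h ∈ PiSet) ∧
    vectorSpan ℝ PiSet = LinearMap.ker ((Matrix.mulVecLin Jhat)) ∧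
    Module.finrank ℝ (LinearMap.ker (Matrix.mulVecLin Jhat)) + Jhat.rank
      = Fintype.card X := by
  classical
  have hmem : ∀ P, P ∈ PiSet ↔ P ∈ stdSimplex ℝ X ∧ P ᵥ* of W = Qstar := by
    simp [hPi, stdSimplex, funext_iff, vecMul, dotProduct, and_assoc]
  have hrow : of W *ᵥ 1 = 1 := by
    ext x
    simp [mulVec, dotProduct, hW1]
  have hJW : Jhat = of W * diagonal Qstar⁻¹ * (of W)ᵀ := by
    ext x x'
    rw [mul_apply]
    simp [hJ, mul_diagonal, div_eq_mul_inv, mul_right_comm]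
  have hker : ∀ h, Jhat *ᵥ h = 0 ↔ h ᵥ* of W = 0 := fun h => hJW ▸
    mul_diagonal_mul_transpose_mulVec_eq_zero_iff _ (fun y => inv_pos.2 (hQpos y)) h
  have hone : ∀ P ∈ PiSet, Jhat *ᵥ P = 1 := fun P hP => hJW ▸
    mul_diagonal_inv_mul_transpose_mulVec_eq_one _ hrow (fun y => (hQpos y).ne') ((hmem P).1 hP).2
  have hfeasible : ∀ h : X → ℝ, Jhat *ᵥ h = 0 → (∑ x, h x = 0) →
      ∀ P ∈ PiSet, (∀ x, 0 < P x) → ∃ ε : ℝ, 0 < ε ∧ P + ε • h ∈ PiSet := by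
    intro h hJh hh P hP hPpos
    obtain ⟨ε, hε, hεP⟩ := exists_pos_add_smul_mem_stdSimplex ((hmem P).1 hP).1 hPpos hh
    refine ⟨ε, hε, (hmem _).2 ⟨hεP, ?_⟩⟩
    rw [add_vecMul, smul_vecMul, (hker h).1 hJh, ((hmem P).1 hP).2, smul_zero, add_zero]
  refine ⟨hone, hfeasible, ?_, ?_⟩
  · obtain ⟨P₀, hP₀, hP₀pos⟩ := hint
    refine vectorSpan_eq_ker_of_exists_add_smul_mem _ hone hP₀ fun h hh => ?_
    have hJh : Jhat *ᵥ h = 0 := hh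
    have hsum : ∑ x, h x = 0 := by
      simp [sum_eq_sum_vecMul_of_mulVec_one hrow h, (hker h).1 hJh]
    obtain ⟨ε, hε, hεP⟩ := hfeasible h hJh hsum P₀ hP₀ hP₀pos
    exact ⟨ε, hε.ne', hεP⟩
  · rw [Matrix.rank, add_comm, LinearMap.finrank_range_add_finrank_ker,
      Module.finrank_fintype_fun_eq_card]

/-- dimensionality identity `dim(Π) = nullity(Ĵ) = |X̂| − rank(Ĵ)`:
`Ĵ P = 1` for every `P ∈ Π`, the direction space of the polytope `Π` equals `ker(Ĵ)`,
every `h ∈ ker(Ĵ)` with `Σ_x h(x) = 0` is a feasible tangent direction at a relative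
interior point of `Π`, and `nullity(Ĵ) + rank(Ĵ) = |X̂|`. (Here the index type `X`
plays the role of `X̂`.) -/
theorem capacity_polytope_dimension
    {X Y : Type*} [Fintype X] [Fintype Y] [DecidableEq X]
    (W : X → Y → ℝ) (hW0 : ∀ x y, 0 ≤ W x y) (hW1 : ∀ x, ∑ y, W x y = 1)
    (Qstar : Y → ℝ) (hQpos : ∀ y, 0 < Qstar y) (hQ1 : ∑ y, Qstar y = 1)
    (PiSet : Set (X → ℝ))
    (hPi : PiSet = {P | (∀ x, 0 ≤ P x) ∧ (∑ x, P x = 1) ∧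
                        ∀ y, ∑ x, P x * W x y = Qstar y})
    (hint : ∃ P₀ ∈ PiSet, ∀ x, 0 < P₀ x)
    (Jhat : Matrix X X ℝ)
    (hJ : ∀ x x', Jhat x x' = ∑ y, W x y * W x' y / Qstar y) :
    (∀ P ∈ PiSet, Jhat *ᵥ P = fun _ => 1) ∧
    (∀ h : X → ℝ, Jhat *ᵥ h = 0 → (∑ x, h x = 0) →
      ∀ P ∈ PiSet, (∀ x, 0 < P x) → ∃ ε : ℝ, 0 < ε ∧ P + ε • h ∈ PiSet) ∧
    vectorSpan ℝ PiSet = LinearMap.ker ((Matrix.mulVecLin Jhat)) ∧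
    Module.finrank ℝ (LinearMap.ker (Matrix.mulVecLin Jhat)) + Jhat.rank
      = Fintype.card X :=
  capacity_polytope_dimension_general W hW1 Qstar hQpos PiSet hPi hint Jhat hJ
end
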